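/- Let k be a field and h ≥ 1. The largest ideal of k[t] contained in the subring k[t², t^{2h+1}] is the principal ideal t^{2h}·k[t]. -/

import Mathlib

open Polynomial

/-- Subalgebra of polynomials whose odd coefficients below `2h+1` vanish. -/
def oddLowSub (k : Type*) [Field k] (h : ℕ) : Subalgebra k k[X] where
  carrier := {p | ∀ m, Odd m → m < 2 * h + 1 → p.coeff m = 0}
  mul_mem' := by
    intro p q hp hq m hm hlt
    simp only [Set.mem_setOf_eq] at *
    rw [coeff_mul]
    apply Finset.sum_eq_zero
    rintro ⟨i, j⟩ hij
    rw [Finset.HasAntidiagonal.mem_antidiagonal] at hij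
    rcases Nat.even_or_odd i with hi | hi
    · have hj : Odd j := by
        subst hij
        rcases Nat.even_or_odd j with hj | hj
        · exact absurd (Even.add hi hj) (Nat.not_even_iff_odd.mpr hm)
        · exact hj
      have : q.coeff j = 0 := hq j hj (lt_of_le_of_lt (hij ▸ Nat.le_add_left j i) hlt)
      simp [this]
    · have : p.coeff i = 0 := hp i hi (lt_of_le_of_lt (hij ▸ Nat.le_add_right i j) hlt)
      simp [this]
  add_mem' := by
    intro p q hp hq m hm hlt
    simp only [Set.mem_setOf_eq] at *
    rw [coeff_add, hp m hm hlt, hq m hm hlt, add_zero]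
  one_mem' := by
    intro m hm hlt
    simp only [coeff_one]
    have : m ≠ 0 := by rintro rfl; simpa using Nat.odd_iff.mp hm
    simp [this]
  algebraMap_mem' := by
    intro a m hm hlt
    have : m ≠ 0 := by rintro rfl; simpa using Nat.odd_iff.mp hm
    simp [coeff_C, this]

theorem stmt_4 (k : Type*) [Field k] (h : ℕ) (hh : 1 ≤ h) (f : k[X]) :
    (∀ g : k[X], f * g ∈ Algebra.adjoin k {(X : k[X]) ^ 2, (X : k[X]) ^ (2 * h + 1)}) ↔
      f ∈ Ideal.span {(X : k[X]) ^ (2 * h)} := by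
  set A := Algebra.adjoin k {(X : k[X]) ^ 2, (X : k[X]) ^ (2 * h + 1)} with hA
  have hX2 : (X : k[X]) ^ 2 ∈ A := Algebra.subset_adjoin (Set.mem_insert _ _)
  have hXodd : (X : k[X]) ^ (2 * h + 1) ∈ A :=
    Algebra.subset_adjoin (Set.mem_insert_of_mem _ rfl)
  have hpow : ∀ n : ℕ, 2 * h ≤ n → (X : k[X]) ^ n ∈ A := by
    intro n hn
    rcases Nat.even_or_odd n with ⟨r, hr⟩ | ⟨r, hr⟩
    · have : (X : k[X]) ^ n = ((X : k[X]) ^ 2) ^ r := by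
        rw [← pow_mul]; congr 1; omega
      rw [this]; exact pow_mem hX2 r
    · have hr' : h ≤ r := by omega
      have : (X : k[X]) ^ n = (X : k[X]) ^ (2 * h + 1) * ((X : k[X]) ^ 2) ^ (r - h) := by
        rw [← pow_mul, ← pow_add]; congr 1; omega
      rw [this]; exact mul_mem hXodd (pow_mem hX2 _)
  constructor
  · intro H
    have hsub : A ≤ oddLowSub k h := by
      rw [hA]
      apply Algebra.adjoin_le
      rintro x (rfl | rfl)
      · intro m hm hlt
        have : m ≠ 2 := by rintro rfl; exact (by norm_num : ¬ Odd 2) hm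
        simp [coeff_X_pow, this]
      · intro m hm hlt
        have : m ≠ 2 * h + 1 := by omega
        simp [coeff_X_pow, this]
    have h1 := hsub (by simpa using H 1)
    have hX := hsub (H X)
    rw [Ideal.mem_span_singleton, Polynomial.X_pow_dvd_iff]
    intro d hd
    rcases Nat.even_or_odd d with hde | hdo
    · have hodd : Odd (d + 1) := Even.add_one hde
      have := hX (d + 1) hodd (by omega)
      rwa [coeff_mul_X] at this
    · exact h1 d hdo (by omega)
  · intro hf g
    rw [Ideal.mem_span_singleton] at hf
    obtain ⟨q, rfl⟩ := hf
    rw [mul_assoc]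
    set p := q * g
    have : ∀ p : k[X], (X : k[X]) ^ (2 * h) * p ∈ A := by
      intro p
      induction p using Polynomial.induction_on' with
      | add p q hp hq => rw [mul_add]; exact add_mem hp hq
      | monomial n a =>
        rw [← C_mul_X_pow_eq_monomial, mul_left_comm, ← pow_add]
        exact mul_mem (Subalgebra.algebraMap_mem A a) (hpow _ (by omega))
    exact this p
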